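/- For every positive integer n and every integer k with 0 ≤ k ≤ n, the identity Σ_{T ∈ RInc_k(2×n)} q^{maj(T)} = q^{n−k} · Σ_{T ∈ RInc_k(2×n)} q^{amaj(T)} holds in ℤ[q]. -/

import Mathlib

open Polynomial

/-- Major index: sum of all `i` such that `i` appears in row 1 and `i+1` appears in row 2. -/
def maj {n : ℕ} (T : (Fin n → ℕ) × (Fin n → ℕ)) : ℕ :=
  ∑ i ∈ (Finset.image T.1 Finset.univ).filter (fun i => ∃ j, T.2 j = i + 1), i

/-- Amajor index: sum of all `i` such that `i` appears in row 2 and `i+1` appears in row 1. -/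
def amaj {n : ℕ} (T : (Fin n → ℕ) × (Fin n → ℕ)) : ℕ :=
  ∑ i ∈ (Finset.image T.2 Finset.univ).filter (fun i => ∃ j, T.1 j = i + 1), i

/-- Row-increasing tableaux of shape 2×n with entry set `{1, …, 2n−k}`:
rows strictly increasing, columns weakly increasing. -/
def RInc (n k : ℕ) : Set ((Fin n → ℕ) × (Fin n → ℕ)) :=
  {T | StrictMono T.1 ∧ StrictMono T.2 ∧ (∀ i, T.1 i ≤ T.2 i) ∧
    Set.range T.1 ∪ Set.range T.2 = Set.Icc 1 (2 * n - k)}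

/-!
Encode `T ∈ RInc n k` by the word of length `2n - k` whose `v`-th letter records whether `v`
occurs in the first row only, in the second row only, or in both. A row is determined by its set
of entries, and the column condition becomes the ballot condition that no prefix of the word has
more second-row than first-row letters. `maj` sums the values at which a first-row letter is
followed by a second-row letter, `amaj` those at which a second-row letter is followed by a
first-row letter.

Rotating every maximal run of letters other than "first row only" one step to the left is a
bijection of ballot words of the same content. Inside a run it turns each ascent into a descent at
the same place; the remaining terms, a descent just before each run and an ascent at its end,
telescope to the number of "first row only" letters, which is `n - k`.
-/

namespace TableauWord

open Finset

/-- The rows of a two-row tableau in which a value occurs. -/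
inductive Letter
  | fst | snd | both
  deriving DecidableEq

namespace Letter

instance : Fintype Letter := ⟨{fst, snd, both}, fun a => by cases a <;> simp⟩

def inFst : Letter → Bool
  | fst => true | snd => false | both => true

def inSnd : Letter → Bool
  | fst => false | snd => true | both => true

def ofBools : Bool → Bool → Letter
  | true, true => both
  | true, false => fst
  | false, _ => snd

@[simp] theorem inFst_ofBools (x y : Bool) : (ofBools x y).inFst = x := by
  cases x <;> cases y <;> rfl

@[simp] theorem inSnd_ofBools (x y : Bool) : (ofBools x y).inSnd = (!x || y) := by
  cases x <;> cases y <;> rfl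

@[simp] theorem ofBools_inFst_inSnd (a : Letter) : ofBools a.inFst a.inSnd = a := by
  cases a <;> rfl

end Letter

open Letter

/-- The letter at index `j` stands for the value `p + j + 1`. -/
def descSum (P Q : Letter → Bool) : ℕ → List Letter → ℕ
  | _, [] => 0
  | p, a :: w => (if P a && w.head?.any Q then p + 1 else 0) + descSum P Q (p + 1) w

def IsBallot (h : ℕ) (w : List Letter) : Prop :=
  ∀ t, (w.take t).countP inSnd ≤ h + (w.take t).countP inFst

def ballotWords (n k : ℕ) : Set (List Letter) :=
  {w | w.length = 2 * n - k ∧ w.countP inFst = n ∧ w.countP inSnd = n ∧ IsBallot 0 w}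

/-- Moves the first letter of every maximal run of letters other than `fst` to the end of the
run. -/
def rotateRuns : List Letter → List Letter
  | c :: a :: w =>
    if c = fst then fst :: rotateRuns (a :: w)
    else if a = fst then c :: fst :: rotateRuns w
    else a :: rotateRuns (c :: w)
  | w => w

/-- Moves the last letter of every maximal run of letters other than `fst` to the front of the
run. -/
def unrotateRuns : List Letter → List Letter
  | a :: b :: w =>
    if a = fst ∨ b = fst then a :: unrotateRuns (b :: w)
    else match unrotateRuns (b :: w) with
      | x :: v => x :: a :: v
      | [] => [a]
  | w => w

theorem rotateRuns_perm (w : List Letter) : (rotateRuns w).Perm w := by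
  fun_induction rotateRuns w with
  | case1 a w ih => exact ih.cons _
  | case2 c w _ ih => exact (ih.cons _).cons _
  | case3 c a w _ _ ih => exact (ih.cons _).trans (.swap _ _ _)
  | case4 => rfl

theorem head?_any_inSnd_rotateRuns (w : List Letter) :
    (rotateRuns w).head?.any inSnd = w.head?.any inSnd := by
  fun_induction rotateRuns w with
  | case3 c a w hc ha => cases c <;> cases a <;> simp_all [inSnd]
  | _ => rfl

theorem unrotateRuns_fst_cons (w : List Letter) :
    unrotateRuns (fst :: w) = fst :: unrotateRuns w := by
  rcases w with _ | ⟨b, w⟩ <;> simp [unrotateRuns]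

theorem unrotateRuns_rotateRuns (w : List Letter) : unrotateRuns (rotateRuns w) = w := by
  fun_induction rotateRuns w with
  | case1 a w ih => rw [unrotateRuns_fst_cons, ih]
  | case2 c w _ ih => simp [unrotateRuns, unrotateRuns_fst_cons, ih]
  | case3 c a w hc ha ih =>
    obtain ⟨b, v, hbv, hb⟩ : ∃ b v, rotateRuns (c :: w) = b :: v ∧ b ≠ fst := by
      have := head?_any_inSnd_rotateRuns (c :: w)
      generalize rotateRuns (c :: w) = r at this
      rcases r with _ | ⟨b, v⟩ <;> cases c <;> simp_all [inSnd]
      all_goals rintro rfl; simp at this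
    rw [hbv] at ih ⊢
    simp [unrotateRuns, ha, hb, ih]
  | case4 w hw => exact unrotateRuns.eq_2 w hw

theorem rotateRuns_injective : Function.Injective rotateRuns :=
  Function.LeftInverse.injective unrotateRuns_rotateRuns

theorem descSum_rotateRuns (w : List Letter) (hw : w.getLast? ≠ some fst) (p : ℕ) :
    descSum inFst inSnd p (rotateRuns w) =
      descSum inSnd inFst p w + w.count fst + if w.head? = some fst then p else 0 := by
  fun_induction rotateRuns w generalizing p with
  | case1 a w ih =>
    rw [List.getLast?_cons_cons] at hw
    simp only [descSum, head?_any_inSnd_rotateRuns, ih hw, List.count_cons]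
    cases a <;> simp [inFst, inSnd] <;> omega
  | case2 c w hc ih =>
    rcases w with _ | ⟨b, w⟩
    · simp at hw
    rw [List.getLast?_cons_cons, List.getLast?_cons_cons] at hw
    simp only [descSum, head?_any_inSnd_rotateRuns, ih hw, List.count_cons]
    cases c <;> cases b <;> simp_all [inFst, inSnd] <;> omega
  | case3 c a w hc ha ih =>
    have hw' : (c :: w).getLast? ≠ some fst := by
      rw [List.getLast?_cons_cons] at hw
      simp only [List.getLast?_cons, ne_eq, Option.some.injEq] at hw ⊢
      revert hw; cases w.getLast? <;> simp_all
    simp only [descSum, head?_any_inSnd_rotateRuns, ih hw', List.count_cons]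
    cases c <;> cases a <;> simp_all [inFst, inSnd] <;> omega
  | case4 w hw' =>
    rcases w with _ | ⟨a, _ | ⟨b, w⟩⟩
    · simp [descSum]
    · cases a <;> simp_all [descSum]
    · exact absurd rfl (hw' a b w)

theorem isBallot_cons {h : ℕ} {a : Letter} {w : List Letter} :
    IsBallot h (a :: w) ↔
      a.inSnd.toNat ≤ h + a.inFst.toNat ∧ IsBallot (h + a.inFst.toNat - a.inSnd.toNat) w := by
  constructor
  · intro hb
    refine ⟨?_, fun t => ?_⟩
    · have := hb 1
      cases a <;> simp_all [inFst, inSnd]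
    · have := hb (t + 1)
      simp only [List.take_succ_cons, List.countP_cons] at this
      cases a <;> simp_all [inFst, inSnd] <;> omega
  · rintro ⟨ha, hb⟩ (_ | t)
    · simp
    · have := hb t
      simp only [List.take_succ_cons, List.countP_cons]
      cases a <;> simp_all [inFst, inSnd] <;> omega

theorem isBallot_rotateRuns {h : ℕ} {w : List Letter} (hw : IsBallot h w) :
    IsBallot h (rotateRuns w) := by
  fun_induction rotateRuns w generalizing h with
  | case1 a w ih =>
    rw [isBallot_cons] at hw ⊢
    exact ⟨hw.1, ih hw.2⟩
  | case2 c w hc ih =>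
    rw [isBallot_cons, isBallot_cons] at hw ⊢
    exact ⟨hw.1, hw.2.1, ih hw.2.2⟩
  | case3 c a w hc ha ih =>
    simp only [isBallot_cons] at hw ⊢
    refine ⟨?_, ih (isBallot_cons.2 ?_)⟩ <;> cases c <;> cases a <;> simp_all [inFst, inSnd]
  | case4 => exact hw

theorem getLast?_ne_fst_of_isBallot {w : List Letter} (hw : IsBallot 0 w)
    (hc : w.countP inFst ≤ w.countP inSnd) : w.getLast? ≠ some fst := by
  intro hlast
  obtain ⟨v, rfl⟩ : ∃ v, w = v ++ [fst] :=
    ⟨w.dropLast, (List.dropLast_append_getLast? _ hlast).symm⟩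
  have := hw v.length
  simp only [List.take_left', List.countP_append, List.countP_singleton, inFst, inSnd,
    if_true, Bool.false_eq_true, if_false] at this hc
  omega

theorem count_fst_add_countP_inSnd (w : List Letter) :
    w.count fst + w.countP inSnd = w.length := by
  induction w with
  | nil => rfl
  | cons a w ih => cases a <;> simp [List.countP_cons, inSnd] <;> omega

theorem ballotWords_finite (n k : ℕ) : (ballotWords n k).Finite :=
  (List.finite_length_eq Letter (2 * n - k)).subset fun _ hw => hw.1

theorem rotateRuns_bijOn (n k : ℕ) :
    Set.BijOn rotateRuns (ballotWords n k) (ballotWords n k) := by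
  refine ((ballotWords_finite n k).injOn_iff_bijOn_of_mapsTo ?_).1 rotateRuns_injective.injOn
  rintro w ⟨hlen, h1, h2, hb⟩
  have hp := rotateRuns_perm w
  exact ⟨hp.length_eq.trans hlen, (hp.countP_eq _).trans h1, (hp.countP_eq _).trans h2,
    isBallot_rotateRuns hb⟩

theorem descSum_rotateRuns_of_mem {n k : ℕ} {w : List Letter} (hw : w ∈ ballotWords n k) :
    descSum inFst inSnd 0 (rotateRuns w) = descSum inSnd inFst 0 w + (n - k) := by
  obtain ⟨hlen, h1, h2, hb⟩ := hw
  have := count_fst_add_countP_inSnd w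
  rw [descSum_rotateRuns w (getLast?_ne_fst_of_isBallot hb (h1.trans h2.symm).le)]
  simp only [ite_self, add_zero]
  omega

def values (P : Letter → Bool) (w : List Letter) : Finset ℕ :=
  ((range w.length).filter fun j => w[j]?.any P).image (· + 1)

section Values

variable {P Q : Letter → Bool} {w : List Letter}

theorem mem_values {v : ℕ} : v ∈ values P w ↔ 0 < v ∧ w[v - 1]?.any P := by
  simp only [values, mem_image, mem_filter, mem_range]
  constructor
  · rintro ⟨j, ⟨-, hj⟩, rfl⟩
    simpa using hj
  · rintro ⟨hv, hP⟩
    refine ⟨v - 1, ⟨?_, hP⟩, by omega⟩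
    by_contra h
    simp [List.getElem?_eq_none (not_lt.1 h)] at hP

@[simp] theorem zero_notMem_values : 0 ∉ values P w := by simp [mem_values]

@[simp] theorem succ_mem_values {j : ℕ} : j + 1 ∈ values P w ↔ w[j]?.any P := by
  simp [mem_values]

theorem values_take (t : ℕ) : values P (w.take t) = (values P w).filter (· ≤ t) := by
  ext v
  simp only [mem_values, mem_filter, List.getElem?_take]
  split_ifs <;> grind

theorem card_values : #(values P w) = w.countP P := by
  rw [values, card_image_of_injective _ (add_left_injective 1), card_filter]
  induction w with
  | nil => simp
  | cons a w ih =>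
    rw [List.length_cons, sum_range_succ', List.countP_cons, ← ih]
    simp

theorem card_values_filter_le (t : ℕ) : #((values P w).filter (· ≤ t)) = (w.take t).countP P := by
  rw [← values_take, card_values]

theorem values_inFst_union_values_inSnd : values inFst w ∪ values inSnd w = Icc 1 w.length := by
  ext v
  simp only [mem_union, mem_values, mem_Icc]
  rcases lt_or_ge (v - 1) w.length with h | h
  · rw [List.getElem?_eq_getElem h]
    cases w[v - 1] <;> simp [inFst, inSnd] <;> omega
  · rw [List.getElem?_eq_none h]
    grind

theorem descSum_eq_sum_range (p : ℕ) : descSum P Q p w =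
    ∑ j ∈ range w.length, if w[j]?.any P && w[j + 1]?.any Q then p + j + 1 else 0 := by
  induction w generalizing p with
  | nil => rfl
  | cons a w ih =>
    rw [descSum, ih, List.length_cons, sum_range_succ', add_comm]
    congr 1
    · refine sum_congr rfl fun j _ => ?_
      simp only [List.getElem?_cons_succ]
      split_ifs <;> omega
    · simp [List.head?_eq_getElem?]

theorem descSum_eq_sum_values :
    descSum P Q 0 w = ∑ v ∈ (values P w).filter (· + 1 ∈ values Q w), v := by
  simp only [mem_values, Nat.add_sub_cancel, Nat.succ_pos, true_and]
  rw [descSum_eq_sum_range, values, filter_image, sum_image (fun _ _ _ _ => by omega),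
    filter_filter, sum_filter]
  exact sum_congr rfl fun j _ => by simp

theorem forall_le_iff_card_filter_le {α : Type*} [LinearOrder α] {n : ℕ} {a b : Fin n → α}
    (ha : StrictMono a) (hb : StrictMono b) :
    (∀ i, a i ≤ b i) ↔ ∀ t, #{i | b i ≤ t} ≤ #{i | a i ≤ t} := by
  refine ⟨fun h t => card_le_card fun i => ?_, fun h i => ?_⟩
  · simpa using fun hi => (h i).trans hi
  · by_contra! hi
    have hb_le : #{j | b j ≤ b i} = i + 1 := by simp [hb.le_iff_le, filter_ge_eq_Iic]
    have ha_le : #{j | a j ≤ b i} ≤ i :=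
      calc #{j | a j ≤ b i} ≤ #(Iio i) := card_le_card fun j hj => by
            simpa [← ha.lt_iff_lt] using (mem_filter.1 hj).2.trans_lt hi
        _ = i := Fin.card_Iio i
    have := h (b i)
    omega

theorem isBallot_iff_forall_le {n : ℕ} {a b : Fin n → ℕ} (ha : StrictMono a)
    (hb : StrictMono b) (hwa : univ.image a = values inFst w)
    (hwb : univ.image b = values inSnd w) :
    IsBallot 0 w ↔ ∀ i, a i ≤ b i := by
  have card_le {f : Fin n → ℕ} (hf : f.Injective) (t : ℕ) :
      #{i | f i ≤ t} = #((univ.image f).filter (· ≤ t)) := by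
    rw [filter_image, card_image_of_injective _ hf]
  simp only [forall_le_iff_card_filter_le ha hb, IsBallot, zero_add, card_le ha.injective,
    card_le hb.injective, hwa, hwb, card_values_filter_le]

end Values

def toWord (m : ℕ) {n : ℕ} (T : (Fin n → ℕ) × (Fin n → ℕ)) : List Letter :=
  (List.range m).map fun j => ofBools (j + 1 ∈ univ.image T.1) (j + 1 ∈ univ.image T.2)

section Tableau

variable {n k : ℕ} {T : (Fin n → ℕ) × (Fin n → ℕ)}

theorem getElem?_toWord (m j : ℕ) : (toWord m T)[j]? =
    if j < m then some (ofBools (j + 1 ∈ univ.image T.1) (j + 1 ∈ univ.image T.2)) else none := by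
  split_ifs with h <;> simp [toWord, h]

theorem image_union_image_of_mem_RInc (hT : T ∈ RInc n k) :
    univ.image T.1 ∪ univ.image T.2 = Icc 1 (2 * n - k) := by
  apply Finset.coe_injective
  simpa using hT.2.2.2

theorem values_toWord (hT : T ∈ RInc n k) :
    values inFst (toWord (2 * n - k) T) = univ.image T.1 ∧
      values inSnd (toWord (2 * n - k) T) = univ.image T.2 := by
  have hunion := image_union_image_of_mem_RInc hT
  have hcover (j : ℕ) : j + 1 ∈ univ.image T.1 ∨ j + 1 ∈ univ.image T.2 ↔ j < 2 * n - k := by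
    rw [← mem_union, hunion, mem_Icc]; omega
  have hzero : 0 ∉ univ.image T.1 ∪ univ.image T.2 := by simp [hunion]
  have succ_mem (P : Letter → Bool) (j : ℕ) : j + 1 ∈ values P (toWord (2 * n - k) T) ↔
      j < 2 * n - k ∧ P (ofBools (j + 1 ∈ univ.image T.1) (j + 1 ∈ univ.image T.2)) := by
    rw [succ_mem_values, getElem?_toWord]
    split_ifs <;> simp [*]
  refine ⟨ext fun v => ?_, ext fun v => ?_⟩ <;> rcases v with _ | j
  · exact iff_of_false zero_notMem_values fun h => hzero (mem_union_left _ h)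
  · have := hcover j
    simp only [succ_mem, inFst_ofBools, decide_eq_true_eq]
    tauto
  · exact iff_of_false zero_notMem_values fun h => hzero (mem_union_right _ h)
  · have := hcover j
    simp only [succ_mem, inSnd_ofBools, Bool.or_eq_true, Bool.not_eq_true', decide_eq_true_eq,
      decide_eq_false_iff_not]
    tauto

theorem toWord_eq {w : List Letter} {a b : Fin n → ℕ} (hwa : univ.image a = values inFst w)
    (hwb : univ.image b = values inSnd w) : toWord w.length (a, b) = w := by
  ext j x
  by_cases hj : j < w.length <;> simp [getElem?_toWord, hj, hwa, hwb]

theorem maj_eq_descSum (hT : T ∈ RInc n k) :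
    maj T = descSum inFst inSnd 0 (toWord (2 * n - k) T) := by
  simp [descSum_eq_sum_values, values_toWord hT, maj]

theorem amaj_eq_descSum (hT : T ∈ RInc n k) :
    amaj T = descSum inSnd inFst 0 (toWord (2 * n - k) T) := by
  simp [descSum_eq_sum_values, values_toWord hT, amaj]

theorem toWord_mem_ballotWords (hT : T ∈ RInc n k) : toWord (2 * n - k) T ∈ ballotWords n k := by
  obtain ⟨h1, h2⟩ := values_toWord hT
  refine ⟨by simp [toWord], ?_, ?_, (isBallot_iff_forall_le hT.1 hT.2.1 h1.symm h2.symm).2 hT.2.2.1⟩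
  · rw [← card_values, h1, card_image_of_injective _ hT.1.injective, card_univ, Fintype.card_fin]
  · rw [← card_values, h2, card_image_of_injective _ hT.2.1.injective, card_univ, Fintype.card_fin]

theorem range_eq_coe_image (f : Fin n → ℕ) : Set.range f = ↑(univ.image f) := by simp

theorem toWord_injOn : Set.InjOn (toWord (2 * n - k)) (RInc n k) := by
  intro T hT T' hT' h
  obtain ⟨h1, h2⟩ := values_toWord hT
  obtain ⟨h1', h2'⟩ := values_toWord hT'
  rw [h] at h1 h2
  refine Prod.ext ((hT.1.range_inj hT'.1).1 ?_) ((hT.2.1.range_inj hT'.2.1).1 ?_)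
  · rw [range_eq_coe_image, range_eq_coe_image, ← h1, h1']
  · rw [range_eq_coe_image, range_eq_coe_image, ← h2, h2']

theorem exists_mem_RInc_toWord_eq {w : List Letter} (hw : w ∈ ballotWords n k) :
    ∃ T ∈ RInc n k, toWord (2 * n - k) T = w := by
  obtain ⟨hlen, h1, h2, hb⟩ := hw
  let a := (values inFst w).orderEmbOfFin (card_values.trans h1)
  let b := (values inSnd w).orderEmbOfFin (card_values.trans h2)
  have ha : univ.image a = values inFst w := image_orderEmbOfFin_univ _ _
  have hb' : univ.image b = values inSnd w := image_orderEmbOfFin_univ _ _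
  refine ⟨(a, b), ⟨a.strictMono, b.strictMono,
    (isBallot_iff_forall_le a.strictMono b.strictMono ha hb').1 hb, ?_⟩, hlen ▸ toWord_eq ha hb'⟩
  rw [range_eq_coe_image, range_eq_coe_image, ha, hb', ← coe_union,
    values_inFst_union_values_inSnd, hlen, coe_Icc]

end Tableau

theorem toWord_bijOn (n k : ℕ) :
    Set.BijOn (toWord (2 * n - k)) (RInc n k) (ballotWords n k) :=
  ⟨fun _ => toWord_mem_ballotWords, toWord_injOn, fun _ hw => exists_mem_RInc_toWord_eq hw⟩

end TableauWord

open TableauWord Letter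

theorem maj_eq_shifted_amaj_general (n k : ℕ) :
    ∑ᶠ T ∈ RInc n k, (X : Polynomial ℤ) ^ maj T
      = X ^ (n - k) * ∑ᶠ T ∈ RInc n k, (X : Polynomial ℤ) ^ amaj T := by
  calc ∑ᶠ T ∈ RInc n k, (X : ℤ[X]) ^ maj T
      = ∑ᶠ w ∈ ballotWords n k, X ^ descSum inFst inSnd 0 w :=
        finsum_mem_eq_of_bijOn _ (toWord_bijOn n k) fun T hT => by rw [maj_eq_descSum hT]
    _ = ∑ᶠ w ∈ ballotWords n k, X ^ (n - k) * X ^ descSum inSnd inFst 0 w :=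
        (finsum_mem_eq_of_bijOn _ (rotateRuns_bijOn n k) fun w hw => by
          rw [descSum_rotateRuns_of_mem hw, pow_add, mul_comm]).symm
    _ = X ^ (n - k) * ∑ᶠ T ∈ RInc n k, X ^ amaj T := by
        rw [mul_finsum_mem]
        exact (finsum_mem_eq_of_bijOn _ (toWord_bijOn n k) fun T hT => by
          rw [amaj_eq_descSum hT]).symm

/-- Σ_{T ∈ RInc_k(2×n)} q^maj(T) = q^(n−k) · Σ_{T ∈ RInc_k(2×n)} q^amaj(T). -/
theorem maj_eq_shifted_amaj (n k : ℕ) (hn : 1 ≤ n) (hk : k ≤ n) :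
    ∑ᶠ T ∈ RInc n k, (X : Polynomial ℤ) ^ maj T
      = X ^ (n - k) * ∑ᶠ T ∈ RInc n k, (X : Polynomial ℤ) ^ amaj T :=
  maj_eq_shifted_amaj_general n k
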